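/- Let 0 < m < n and let X and Y be independent random variables with Gamma distributions of shapes m and n respectively, both with rate 1. Then Pr(XY ≤ ε)/ε^m → Γ(n − m)/(m·Γ(m)·Γ(n)) as ε → 0⁺. -/

import Mathlib

open MeasureTheory ProbabilityTheory Filter Topology

/-!
By independence, `P(XY ≤ ε) = ∫ F(ε / y) dΓₙ(y)`, where `F` is the distribution function of `Γₘ`.
On `(0, t]` the density of `Γₘ` lies between `e⁻ᵗ xᵐ⁻¹ / Γ(m)` and `xᵐ⁻¹ / Γ(m)`, so
`F(t) ≤ tᵐ / (m Γ(m))` and `F(t) / tᵐ → 1 / (m Γ(m))` as `t → 0⁺`. Hence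
`F(ε / y) / εᵐ → y⁻ᵐ / (m Γ(m))`, dominated by that same limit, which is `Γₙ`-integrable exactly
because `m < n`: `∫ y⁻ᵐ dΓₙ = Γ(n - m) / Γ(n)`. Dominated convergence concludes.
-/

open Set

open scoped ENNReal

lemma ENNReal.div_ofReal_rpow_eq_div_ofReal_div_rpow_mul (x : ℝ≥0∞) {a ε y : ℝ} (hε : 0 < ε)
    (hy : 0 < y) :
    x / ENNReal.ofReal (ε ^ a) = x / ENNReal.ofReal ((ε / y) ^ a) * ENNReal.ofReal (y ^ (-a)) := by
  have hy' : ENNReal.ofReal (y ^ (-a)) ≠ 0 :=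
    (ENNReal.ofReal_pos.2 (Real.rpow_pos_of_pos hy _)).ne'
  have hsplit : (ε / y) ^ a = ε ^ a * y ^ (-a) := by
    rw [Real.div_rpow hε.le hy.le, Real.rpow_neg hy.le, div_eq_mul_inv]
  rw [hsplit, ENNReal.ofReal_mul (Real.rpow_nonneg hε.le _), ← ENNReal.mul_div_right_comm,
    ENNReal.mul_div_mul_right _ _ hy' ENNReal.ofReal_ne_top]

lemma tendsto_div_const_nhdsGT_zero {y : ℝ} (hy : 0 < y) :
    Tendsto (fun ε : ℝ => ε / y) (𝓝[>] 0) (𝓝[>] 0) := by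
  refine tendsto_nhdsWithin_of_tendsto_nhds_of_eventually_within _ ?_ ?_
  · exact ((continuous_id.div_const y).tendsto' 0 0 (zero_div y)).mono_left nhdsWithin_le_nhds
  · filter_upwards [self_mem_nhdsWithin] with ε (hε : 0 < ε) using div_pos hε hy

theorem tendsto_lintegral_measure_Iic_div_div_rpow {μ ν : Measure ℝ} {a : ℝ} {K c : ℝ≥0∞}
    (hle : ∀ t, 0 < t → μ (Iic t) ≤ K * ENNReal.ofReal (t ^ a))
    (hlim : Tendsto (fun t => μ (Iic t) / ENNReal.ofReal (t ^ a)) (𝓝[>] 0) (𝓝 c))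
    (hK : K ≠ ∞) (hν : ∀ᵐ y ∂ν, 0 < y) (hmom : ∫⁻ y, ENNReal.ofReal (y ^ (-a)) ∂ν ≠ ∞) :
    Tendsto (fun ε => (∫⁻ y, μ (Iic (ε / y)) ∂ν) / ENNReal.ofReal (ε ^ a)) (𝓝[>] 0)
      (𝓝 (c * ∫⁻ y, ENNReal.ofReal (y ^ (-a)) ∂ν)) := by
  have hmeas : ∀ ε : ℝ, Measurable fun y : ℝ => μ (Iic (ε / y)) := fun ε =>
    (Monotone.measurable fun _ _ h => measure_mono (Iic_subset_Iic.2 h)).comp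
      (measurable_const.div measurable_id)
  have hpull : ∀ ε, (∫⁻ y, μ (Iic (ε / y)) ∂ν) / ENNReal.ofReal (ε ^ a)
      = ∫⁻ y, μ (Iic (ε / y)) / ENNReal.ofReal (ε ^ a) ∂ν := fun ε => by
    simp_rw [div_eq_mul_inv]; exact (lintegral_mul_const _ (hmeas ε)).symm
  have hpow : Measurable fun y : ℝ => ENNReal.ofReal (y ^ (-a)) := by fun_prop
  simp_rw [hpull, ← lintegral_const_mul c hpow]
  refine tendsto_lintegral_filter_of_dominated_convergence (fun y => K * ENNReal.ofReal (y ^ (-a)))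
    (Eventually.of_forall fun ε => (hmeas ε).div_const _) ?_ ?_ ?_
  · filter_upwards [self_mem_nhdsWithin] with ε (hε : 0 < ε)
    filter_upwards [hν] with y hy
    rw [ENNReal.div_ofReal_rpow_eq_div_ofReal_div_rpow_mul _ hε hy]
    exact mul_le_mul_left (ENNReal.div_le_of_le_mul (hle _ (div_pos hε hy))) _
  · rw [lintegral_const_mul' _ _ hK]; exact ENNReal.mul_ne_top hK hmom
  · filter_upwards [hν] with y hy
    refine (ENNReal.Tendsto.mul_const (hlim.comp (tendsto_div_const_nhdsGT_zero hy))
      (Or.inr ENNReal.ofReal_ne_top)).congr' ?_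
    filter_upwards [self_mem_nhdsWithin] with ε (hε : 0 < ε)
    exact (ENNReal.div_ofReal_rpow_eq_div_ofReal_div_rpow_mul _ hε hy).symm

theorem ProbabilityTheory.IndepFun.measure_mul_le_eq_lintegral {Ω : Type*} [MeasurableSpace Ω]
    {P : Measure Ω} [IsFiniteMeasure P] {X Y : Ω → ℝ} (hXY : IndepFun X Y P) (hX : Measurable X)
    (hY : Measurable Y) (hYpos : ∀ᵐ y ∂P.map Y, 0 < y) (ε : ℝ) :
    P {ω | X ω * Y ω ≤ ε} = ∫⁻ y, P.map X (Iic (ε / y)) ∂P.map Y := by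
  have hs : MeasurableSet {p : ℝ × ℝ | p.1 * p.2 ≤ ε} :=
    measurableSet_le (measurable_fst.mul measurable_snd) measurable_const
  rw [show {ω | X ω * Y ω ≤ ε} = (fun ω => (X ω, Y ω)) ⁻¹' {p | p.1 * p.2 ≤ ε} from rfl,
    ← Measure.map_apply (hX.prodMk hY) hs,
    hXY.map_prod_eq_prod_map_map hX.aemeasurable hY.aemeasurable, Measure.prod_apply_symm hs]
  refine lintegral_congr_ae ?_
  filter_upwards [hYpos] with y hy
  congr 1
  ext x
  exact (le_div_iff₀ hy).symm

namespace ProbabilityTheory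

lemma gammaMeasure_Iic_eq_setLIntegral_Ioc (a r : ℝ) {t : ℝ} (ht : 0 ≤ t) :
    gammaMeasure a r (Iic t) = ∫⁻ x in Ioc 0 t, gammaPDF a r x := by
  rw [gammaMeasure, withDensity_apply _ measurableSet_Iic,
    lintegral_Iic_eq_lintegral_Iio_add_Icc _ ht, lintegral_gammaPDF_of_nonpos le_rfl, zero_add,
    setLIntegral_congr Ioc_ae_eq_Icc]

lemma ae_pos_gammaMeasure (a r : ℝ) : ∀ᵐ y ∂gammaMeasure a r, 0 < y := by
  have hneg : {y : ℝ | ¬0 < y} = Iic 0 := by ext; simp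
  rw [ae_iff, hneg, gammaMeasure_Iic_eq_setLIntegral_Ioc a r le_rfl, Ioc_self,
    Measure.restrict_empty, lintegral_zero_measure]

lemma setLIntegral_Ioc_ofReal_mul_rpow_sub_one {a c t : ℝ} (ha : 0 < a) (hc : 0 ≤ c)
    (ht : 0 ≤ t) :
    ∫⁻ x in Ioc 0 t, ENNReal.ofReal (c * x ^ (a - 1)) = ENNReal.ofReal (c / a * t ^ a) := by
  have hint : IntegrableOn (fun x : ℝ => x ^ (a - 1)) (Ioc 0 t) :=
    (intervalIntegral.intervalIntegrable_rpow' (by linarith)).1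
  rw [← ofReal_integral_eq_lintegral_ofReal (hint.const_mul c), integral_const_mul,
    ← intervalIntegral.integral_of_le ht, integral_rpow (Or.inl (by linarith)), sub_add_cancel,
    Real.zero_rpow ha.ne', sub_zero, mul_div_assoc', div_mul_eq_mul_div]
  exact (ae_restrict_iff' measurableSet_Ioc).2 (ae_of_all _ fun x hx =>
    mul_nonneg hc (Real.rpow_nonneg hx.1.le _))

lemma gammaMeasure_Iic_le {a r : ℝ} (ha : 0 < a) (hr : 0 ≤ r) {t : ℝ} (ht : 0 ≤ t) :
    gammaMeasure a r (Iic t) ≤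
      ENNReal.ofReal (r ^ a / Real.Gamma a / a) * ENNReal.ofReal (t ^ a) := by
  have hc : 0 ≤ r ^ a / Real.Gamma a := by positivity
  rw [← ENNReal.ofReal_mul (div_nonneg hc ha.le), gammaMeasure_Iic_eq_setLIntegral_Ioc a r ht,
    ← setLIntegral_Ioc_ofReal_mul_rpow_sub_one ha hc ht]
  refine setLIntegral_mono (by fun_prop) fun x hx => ?_
  have hx0 : 0 ≤ x := hx.1.le
  rw [gammaPDF_of_nonneg hx0]
  refine ENNReal.ofReal_le_ofReal (mul_le_of_le_one_right (by positivity) ?_)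
  exact Real.exp_le_one_iff.2 (neg_nonpos.2 (mul_nonneg hr hx0))

lemma exp_mul_le_gammaMeasure_Iic {a r : ℝ} (ha : 0 < a) (hr : 0 ≤ r) {t : ℝ} (ht : 0 ≤ t) :
    ENNReal.ofReal (Real.exp (-(r * t)) * (r ^ a / Real.Gamma a / a)) * ENNReal.ofReal (t ^ a)
      ≤ gammaMeasure a r (Iic t) := by
  have hc : 0 ≤ Real.exp (-(r * t)) * (r ^ a / Real.Gamma a) := by positivity
  rw [← ENNReal.ofReal_mul (by positivity), gammaMeasure_Iic_eq_setLIntegral_Ioc a r ht,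
    ← mul_div_assoc, ← setLIntegral_Ioc_ofReal_mul_rpow_sub_one ha hc ht]
  refine setLIntegral_mono (measurable_gammaPDFReal a r).ennreal_ofReal fun x hx => ?_
  have hx0 : 0 ≤ x := hx.1.le
  rw [gammaPDF_of_nonneg hx0]
  refine ENNReal.ofReal_le_ofReal ?_
  calc _ = r ^ a / Real.Gamma a * x ^ (a - 1) * Real.exp (-(r * t)) := by ring
    _ ≤ _ := by gcongr; exact hx.2

lemma tendsto_gammaMeasure_Iic_div_rpow {a r : ℝ} (ha : 0 < a) (hr : 0 ≤ r) :
    Tendsto (fun t => gammaMeasure a r (Iic t) / ENNReal.ofReal (t ^ a)) (𝓝[>] 0)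
      (𝓝 (ENNReal.ofReal (r ^ a / Real.Gamma a / a))) := by
  set k := r ^ a / Real.Gamma a / a
  have hlower : Tendsto (fun t => ENNReal.ofReal (Real.exp (-(r * t)) * k)) (𝓝[>] 0)
      (𝓝 (ENNReal.ofReal k)) := by
    have hcont : Continuous fun t => ENNReal.ofReal (Real.exp (-(r * t)) * k) :=
      ENNReal.continuous_ofReal.comp (by fun_prop)
    simpa using hcont.tendsto 0 |>.mono_left nhdsWithin_le_nhds
  refine tendsto_of_tendsto_of_tendsto_of_le_of_le' hlower tendsto_const_nhds ?_ ?_ <;>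
    filter_upwards [self_mem_nhdsWithin] with t (ht : 0 < t)
  · refine (ENNReal.le_div_iff_mul_le (Or.inl ?_) (Or.inl ENNReal.ofReal_ne_top)).2
      (exp_mul_le_gammaMeasure_Iic ha hr ht.le)
    exact (ENNReal.ofReal_pos.2 (Real.rpow_pos_of_pos ht a)).ne'
  · exact ENNReal.div_le_of_le_mul (gammaMeasure_Iic_le ha hr ht.le)

lemma lintegral_ofReal_rpow_gammaMeasure {a r s : ℝ} (ha : 0 < a) (hr : 0 < r)
    (has : 0 < a + s) :
    ∫⁻ y, ENNReal.ofReal (y ^ s) ∂gammaMeasure a r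
      = ENNReal.ofReal (Real.Gamma (a + s) / (Real.Gamma a * r ^ s)) := by
  have hint : ∫ y in Ioi 0, y ^ (a + s - 1) * Real.exp (-(r * y))
      = (1 / r) ^ (a + s) * Real.Gamma (a + s) := Real.integral_rpow_mul_exp_neg_mul_Ioi has hr
  have hintegrable : IntegrableOn (fun y => y ^ (a + s - 1) * Real.exp (-(r * y))) (Ioi 0) :=
    Integrable.of_integral_ne_zero (by rw [hint]; positivity)
  have hpdf : ∀ y ∈ Ioi (0 : ℝ), (gammaPDF a r * fun y => ENNReal.ofReal (y ^ s)) y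
      = ENNReal.ofReal (r ^ a / Real.Gamma a * (y ^ (a + s - 1) * Real.exp (-(r * y)))) := by
    intro y (hy : 0 < y)
    rw [Pi.mul_apply, gammaPDF_of_nonneg hy.le, ← ENNReal.ofReal_mul (by positivity)]
    congr 1
    rw [show a + s - 1 = a - 1 + s by ring, Real.rpow_add hy]
    ring
  have hpos : ∀ᵐ y ∂gammaMeasure a r, y ∈ Ioi 0 := ae_pos_gammaMeasure a r
  have hmeas : Measurable (gammaPDF a r) := (measurable_gammaPDFReal a r).ennreal_ofReal
  rw [← Measure.restrict_eq_self_of_ae_mem hpos, gammaMeasure,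
    setLIntegral_withDensity_eq_setLIntegral_mul _ hmeas (by fun_prop) measurableSet_Ioi,
    setLIntegral_congr_fun measurableSet_Ioi hpdf,
    ← ofReal_integral_eq_lintegral_ofReal (hintegrable.const_mul _), integral_const_mul, hint]
  · congr 1
    rw [one_div, Real.inv_rpow hr.le, Real.rpow_add hr]
    field_simp
  · exact (ae_restrict_iff' measurableSet_Ioi).2 (ae_of_all _ fun y (hy : 0 < y) => by positivity)

end ProbabilityTheory

theorem stmt_17 {Ω : Type*} [MeasurableSpace Ω] (P : Measure Ω) [IsProbabilityMeasure P]
    (m n : ℝ) (hm : 0 < m) (hmn : m < n) (X Y : Ω → ℝ)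
    (hX : Measurable X) (hY : Measurable Y)
    (hXlaw : P.map X = gammaMeasure m 1) (hYlaw : P.map Y = gammaMeasure n 1)
    (hindep : IndepFun X Y P) :
    Tendsto (fun ε : ℝ => (P {ω | X ω * Y ω ≤ ε}).toReal / ε ^ m)
      (𝓝[>] 0) (𝓝 (Real.Gamma (n - m) / (m * Real.Gamma m * Real.Gamma n))) := by
  have hn : 0 < n := hm.trans hmn
  have hprob : ∀ ε, P {ω | X ω * Y ω ≤ ε}
      = ∫⁻ y, gammaMeasure m 1 (Iic (ε / y)) ∂gammaMeasure n 1 := by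
    rw [← hXlaw, ← hYlaw]
    exact hindep.measure_mul_le_eq_lintegral hX hY (hYlaw ▸ ae_pos_gammaMeasure n 1)
  have hmom := lintegral_ofReal_rpow_gammaMeasure hn one_pos (by linarith : 0 < n + -m)
  have hlim := tendsto_lintegral_measure_Iic_div_div_rpow
    (fun t ht => gammaMeasure_Iic_le hm zero_le_one ht.le)
    (tendsto_gammaMeasure_Iic_div_rpow hm zero_le_one) ENNReal.ofReal_ne_top
    (ae_pos_gammaMeasure n 1) (hmom ▸ ENNReal.ofReal_ne_top)
  have hconst : 1 ^ m / Real.Gamma m / m * (Real.Gamma (n + -m) / (Real.Gamma n * 1 ^ (-m)))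
      = Real.Gamma (n - m) / (m * Real.Gamma m * Real.Gamma n) := by
    rw [Real.one_rpow, Real.one_rpow, ← sub_eq_add_neg]
    field_simp
  simp_rw [← hprob] at hlim
  rw [hmom, ← ENNReal.ofReal_mul (by positivity), hconst] at hlim
  have hreal := (ENNReal.tendsto_toReal ENNReal.ofReal_ne_top).comp hlim
  rw [ENNReal.toReal_ofReal (by positivity)] at hreal
  refine hreal.congr' ?_
  filter_upwards [self_mem_nhdsWithin] with ε (hε : 0 < ε)
  rw [Function.comp_apply, ENNReal.toReal_div, ENNReal.toReal_ofReal (by positivity)]
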